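/- arXiv:2003.08877 — 4 statements merged into one kernel-verified Lean document; each statement's English description precedes it below -/
import Mathlib

section
/- Let (C, ⊑) and (A, ≤) be complete lattices, let E_C : x =_η f^C(x) and E_A : x =_η f^A(x) be systems of m fixpoint equations over C and A with the same markers η_1,…,η_m and with solutions s^C ∈ C^m and s^A ∈ A^m, and let α be an m-tuple of monotone functions α_i : C → A. If Πα ∘ f^C ≤ f^A ∘ Πα (pointwise, viewing f^C and f^A as functions C^m → C^m and A^m → A^m), and α_i is continuous and strict for each index i with η_i = μ, then Πα(s^C) ≤ s^A. -/
/-- Least fixpoint of `f` (Knaster–Tarski construction). -/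
def muFix {L : Type*} [CompleteLattice L] (f : L → L) : L := sInf {x | f x ≤ x}

/-- Greatest fixpoint of `f` (Knaster–Tarski construction). -/
def nuFix {L : Type*} [CompleteLattice L] (f : L → L) : L := sSup {x | x ≤ f x}
/-- `g` is (directed-)continuous: it preserves joins of (nonempty) directed sets. -/
def DirContinuous {L M : Type*} [CompleteLattice L] [CompleteLattice M] (g : L → M) : Prop :=
  ∀ S : Set L, S.Nonempty → DirectedOn (· ≤ ·) S → g (sSup S) = sSup (g '' S)

/-- `g` is strict: it maps bottom to bottom. -/
def BotStrict {L M : Type*} [CompleteLattice L] [CompleteLattice M] (g : L → M) : Prop :=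
  g ⊥ = ⊥

/-- `g` is co-continuous: it preserves meets of (nonempty) codirected sets. -/
def CodirContinuous {L M : Type*} [CompleteLattice L] [CompleteLattice M] (g : L → M) : Prop :=
  ∀ S : Set L, S.Nonempty → DirectedOn (· ≥ ·) S → g (sInf S) = sInf (g '' S)

/-- `g` is co-strict: it maps top to top. -/
def TopStrict {L M : Type*} [CompleteLattice L] [CompleteLattice M] (g : L → M) : Prop :=
  g ⊤ = ⊤
/-- Marker of a fixpoint equation: least (`mu`) or greatest (`nu`) fixpoint. -/
inductive EqMarker : Type
  | mu
  | nu

/-- Solution of a system of `m` fixpoint equations `x =_η f(x)` over a complete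
lattice `L`, defined by recursion on `m`: the last variable is treated as a
parameter, the first `m-1` equations are solved recursively, the resulting
one-variable equation is solved by taking the least or greatest fixpoint
according to the marker of the last equation, and the value is substituted
back. -/
def eqSol {L : Type*} [CompleteLattice L] :
    (m : ℕ) → ((Fin m → L) → Fin m → L) → (Fin m → EqMarker) → (Fin m → L)
  | 0, _, _ => fun i => i.elim0
  | m + 1, f, η =>
    let solPrev : L → Fin m → L := fun x =>
      eqSol m (fun v j => f (Fin.snoc v x) j.castSucc) (fun j => η j.castSucc)
    let g : L → L := fun x => f (Fin.snoc (solPrev x) x) (Fin.last m)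
    let slast : L :=
      match η (Fin.last m) with
      | EqMarker.mu => muFix g
      | EqMarker.nu => nuFix g
    Fin.snoc (solPrev slast) slast

section Aux
variable {L : Type*} [CompleteLattice L]

lemma snoc_le_snoc {m : ℕ} {v w : Fin m → L} {x y : L} (hvw : v ≤ w) (hxy : x ≤ y) :
    (Fin.snoc v x : Fin (m+1) → L) ≤ Fin.snoc w y := by
  intro i
  induction i using Fin.lastCases with
  | last => simpa using hxy
  | cast j => simpa using hvw j

lemma muFix_le_muFix {f g : L → L} (h : ∀ x, f x ≤ g x) : muFix f ≤ muFix g := by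
  apply sInf_le_sInf
  intro x hx
  exact le_trans (h x) hx

lemma nuFix_le_nuFix {f g : L → L} (h : ∀ x, f x ≤ g x) : nuFix f ≤ nuFix g := by
  apply sSup_le_sSup
  intro x hx
  exact le_trans hx (h x)

/-- Restricted system stays monotone. -/
lemma restrict_mono {m : ℕ} {f : (Fin (m+1) → L) → Fin (m+1) → L} (hf : Monotone f) (x : L) :
    Monotone (fun (v : Fin m → L) (j : Fin m) => f (Fin.snoc v x) j.castSucc) :=
  fun v w hvw j => hf (snoc_le_snoc hvw le_rfl) j.castSucc

/-- `eqSol` is monotone in the system of functions. -/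
lemma eqSol_mono : ∀ (m : ℕ) (f g : (Fin m → L) → Fin m → L), Monotone f → Monotone g →
    (∀ v i, f v i ≤ g v i) → (η : Fin m → EqMarker) → ∀ i, eqSol m f η i ≤ eqSol m g η i := by
  intro m
  induction m with
  | zero => intro _ _ _ _ _ _ i; exact i.elim0
  | succ m ih =>
    intro f g hf hg hfg η
    set η' : Fin m → EqMarker := fun j => η j.castSucc with hη'
    set solF : L → Fin m → L := fun x =>
      eqSol m (fun v j => f (Fin.snoc v x) j.castSucc) η' with hsolF
    set solG : L → Fin m → L := fun x =>
      eqSol m (fun v j => g (Fin.snoc v x) j.castSucc) η' with hsolG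
    -- solF monotone in x, and solF ≤ solG
    have hsolFmono : ∀ x y : L, x ≤ y → ∀ j, solF x j ≤ solF y j := by
      intro x y hxy j
      exact ih _ _ (restrict_mono hf x) (restrict_mono hf y)
        (fun v i => hf (snoc_le_snoc le_rfl hxy) i.castSucc) η' j
    have hsolGmono : ∀ x y : L, x ≤ y → ∀ j, solG x j ≤ solG y j := by
      intro x y hxy j
      exact ih _ _ (restrict_mono hg x) (restrict_mono hg y)
        (fun v i => hg (snoc_le_snoc le_rfl hxy) i.castSucc) η' j
    have hsolFG : ∀ x : L, ∀ j, solF x j ≤ solG x j := by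
      intro x j
      exact ih _ _ (restrict_mono hf x) (restrict_mono hg x)
        (fun v i => hfg (Fin.snoc v x) i.castSucc) η' j
    set gF : L → L := fun x => f (Fin.snoc (solF x) x) (Fin.last m) with hgF
    set gG : L → L := fun x => g (Fin.snoc (solG x) x) (Fin.last m) with hgG
    have hgFG : ∀ x : L, gF x ≤ gG x := fun x =>
      le_trans (hf (snoc_le_snoc (fun j => hsolFG x j) le_rfl) (Fin.last m))
        (hfg _ (Fin.last m))
    set sF : L := (match η (Fin.last m) with
        | EqMarker.mu => muFix gF
        | EqMarker.nu => nuFix gF) with hsF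
    set sG : L := (match η (Fin.last m) with
        | EqMarker.mu => muFix gG
        | EqMarker.nu => nuFix gG) with hsG
    have hslast : sF ≤ sG := by
      rw [hsF, hsG]
      cases η (Fin.last m) with
      | mu => exact muFix_le_muFix hgFG
      | nu => exact nuFix_le_nuFix hgFG
    have e1 : eqSol (m+1) f η = Fin.snoc (solF sF) sF := rfl
    have e2 : eqSol (m+1) g η = Fin.snoc (solG sG) sG := rfl
    rw [e1, e2]
    exact snoc_le_snoc
      (fun j => le_trans (hsolFmono _ _ hslast j) (hsolFG _ j)) hslast

end Aux


open OrdinalApprox in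
lemma mu_sound {C A : Type*} [CompleteLattice C] [CompleteLattice A]
    (gC : C → C) (gA : A → A) (hgC : Monotone gC) (hgA : Monotone gA)
    (β : C → A) (hβ : Monotone β) (hcont : DirContinuous β) (hstrict : BotStrict β)
    (h : ∀ x, β (gC x) ≤ gA (β x)) : β (muFix gC) ≤ muFix gA := by
  set F : C →o C := ⟨gC, hgC⟩ with hF
  have hfixA : gA (muFix gA) ≤ muFix gA :=
    le_of_eq (OrderHom.map_lfp (⟨gA, hgA⟩ : A →o A))
  have key : ∀ a : Ordinal, β (lfpApprox F ⊥ a) ≤ muFix gA := by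
    intro a
    induction a using Ordinal.induction with
    | h a ih =>
      rw [lfpApprox]
      set S : Set C := {y | ∃ b, ∃ _ : b < a, F (lfpApprox F ⊥ b) = y} ∪ {⊥} with hS
      have hne : S.Nonempty := ⟨⊥, Or.inr rfl⟩
      have hchain : IsChain (· ≤ ·) S := by
        rintro y (⟨b, hb, rfl⟩ | rfl) z (⟨c, hc, rfl⟩ | rfl) _
        · rcases le_total b c with hbc | hbc
          · exact Or.inl (hgC (lfpApprox_monotone F (x := ⊥) hbc))
          · exact Or.inr (hgC (lfpApprox_monotone F (x := ⊥) hbc))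
        · exact Or.inr bot_le
        · exact Or.inl bot_le
        · exact Or.inl le_rfl
      have hdir : DirectedOn (· ≤ ·) S := hchain.directedOn
      have hle : (⊥ ⊔ ⨆ b, ⨆ (_ : b < a), F (lfpApprox F ⊥ b)) ≤ sSup S :=
        sup_le bot_le (iSup₂_le fun b hb => le_sSup (Or.inl ⟨b, hb, rfl⟩))
      refine le_trans (hβ hle) ?_
      rw [hcont S hne hdir]
      apply sSup_le
      rintro _ ⟨y, (⟨b, hb, rfl⟩ | rfl), rfl⟩
      · calc β (gC (lfpApprox F ⊥ b)) ≤ gA (β (lfpApprox F ⊥ b)) := h _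
          _ ≤ gA (muFix gA) := hgA (ih b hb)
          _ ≤ muFix gA := hfixA
      · exact hstrict ▸ bot_le
  have : muFix gC = lfpApprox F ⊥ (Order.succ (Cardinal.mk C)).ord := by
    rw [lfpApprox_ord_eq_lfp]; rfl
  rw [this]; exact key _

lemma nu_sound {C A : Type*} [CompleteLattice C] [CompleteLattice A]
    (gC : C → C) (gA : A → A) (hgC : Monotone gC) (hgA : Monotone gA)
    (β : C → A) (hβ : Monotone β)
    (h : ∀ x, β (gC x) ≤ gA (β x)) : β (nuFix gC) ≤ nuFix gA := by
  have hfix : gC (nuFix gC) = nuFix gC := OrderHom.map_gfp (⟨gC, hgC⟩ : C →o C)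
  apply le_sSup
  calc β (nuFix gC) = β (gC (nuFix gC)) := by rw [hfix]
    _ ≤ gA (β (nuFix gC)) := h _



/-- Sound abstraction for systems of fixpoint equations: if
`Πα ∘ f^C ≤ f^A ∘ Πα` pointwise and each `α_i` with `η_i = μ` is continuous
and strict, then `Πα(s^C) ≤ s^A`. -/
theorem sound_abstraction_for_systems
    {C A : Type*} [CompleteLattice C] [CompleteLattice A]
    (m : ℕ) (fC : (Fin m → C) → Fin m → C) (fA : (Fin m → A) → Fin m → A)
    (hfC : Monotone fC) (hfA : Monotone fA)
    (η : Fin m → EqMarker)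
    (α : Fin m → C → A) (hα : ∀ i, Monotone (α i))
    (hsound : ∀ (v : Fin m → C) (i : Fin m), α i (fC v i) ≤ fA (fun j => α j (v j)) i)
    (hμ : ∀ i, η i = EqMarker.mu → DirContinuous (α i) ∧ BotStrict (α i)) :
    ∀ i, α i (eqSol m fC η i) ≤ eqSol m fA η i := by
  induction m with
  | zero => intro i; exact i.elim0
  | succ m ih =>
    set η' : Fin m → EqMarker := fun j => η j.castSucc with hη'
    set αl : C → A := α (Fin.last m) with hαl
    set fC' : C → (Fin m → C) → Fin m → C :=
      fun x v j => fC (Fin.snoc v x) j.castSucc with hfC'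
    set fA' : A → (Fin m → A) → Fin m → A :=
      fun y v j => fA (Fin.snoc v y) j.castSucc with hfA'
    set solC : C → Fin m → C := fun x => eqSol m (fC' x) η' with hsolC
    set solA : A → Fin m → A := fun y => eqSol m (fA' y) η' with hsolA
    -- snoc commutes with applying α componentwise
    have hsnocα : ∀ (v : Fin m → C) (x : C),
        (fun k => α k ((Fin.snoc v x : Fin (m+1) → C) k)) =
          Fin.snoc (fun j => α j.castSucc (v j)) (αl x) := by
      intro v x
      funext k
      induction k using Fin.lastCases with
      | last => simp [hαl]
      | cast j => simp
    -- parametric induction hypothesis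
    have claim1 : ∀ (x : C) (j : Fin m),
        α j.castSucc (solC x j) ≤ solA (αl x) j := by
      intro x j
      refine ih (fC' x) (fA' (αl x)) (restrict_mono hfC x) (restrict_mono hfA (αl x)) η'
        (fun j => α j.castSucc) (fun j => hα j.castSucc) ?_ (fun j hj => hμ j.castSucc hj) j
      intro v i
      calc α i.castSucc (fC (Fin.snoc v x) i.castSucc)
          ≤ fA (fun k => α k ((Fin.snoc v x : Fin (m+1) → C) k)) i.castSucc :=
            hsound (Fin.snoc v x) i.castSucc
        _ = fA (Fin.snoc (fun j => α j.castSucc (v j)) (αl x)) i.castSucc := by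
            rw [hsnocα]
    -- monotonicity of solutions in the parameter
    have hsolCmono : ∀ x y : C, x ≤ y → ∀ j, solC x j ≤ solC y j := by
      intro x y hxy j
      exact eqSol_mono m _ _ (restrict_mono hfC x) (restrict_mono hfC y)
        (fun v i => hfC (snoc_le_snoc le_rfl hxy) i.castSucc) η' j
    have hsolAmono : ∀ x y : A, x ≤ y → ∀ j, solA x j ≤ solA y j := by
      intro x y hxy j
      exact eqSol_mono m _ _ (restrict_mono hfA x) (restrict_mono hfA y)
        (fun v i => hfA (snoc_le_snoc le_rfl hxy) i.castSucc) η' j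
    set gC : C → C := fun x => fC (Fin.snoc (solC x) x) (Fin.last m) with hgC
    set gA : A → A := fun y => fA (Fin.snoc (solA y) y) (Fin.last m) with hgA
    have hgCmono : Monotone gC := fun x y hxy =>
      hfC (snoc_le_snoc (fun j => hsolCmono x y hxy j) hxy) (Fin.last m)
    have hgAmono : Monotone gA := fun x y hxy =>
      hfA (snoc_le_snoc (fun j => hsolAmono x y hxy j) hxy) (Fin.last m)
    have key : ∀ x : C, αl (gC x) ≤ gA (αl x) := by
      intro x
      calc αl (fC (Fin.snoc (solC x) x) (Fin.last m))
          ≤ fA (fun k => α k ((Fin.snoc (solC x) x : Fin (m+1) → C) k)) (Fin.last m) :=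
            hsound (Fin.snoc (solC x) x) (Fin.last m)
        _ = fA (Fin.snoc (fun j => α j.castSucc (solC x j)) (αl x)) (Fin.last m) := by
            rw [hsnocα]
        _ ≤ fA (Fin.snoc (solA (αl x)) (αl x)) (Fin.last m) :=
            hfA (snoc_le_snoc (fun j => claim1 x j) le_rfl) (Fin.last m)
    set sC : C := (match η (Fin.last m) with
      | EqMarker.mu => muFix gC
      | EqMarker.nu => nuFix gC) with hsC
    set sA : A := (match η (Fin.last m) with
      | EqMarker.mu => muFix gA
      | EqMarker.nu => nuFix gA) with hsA
    have hlast : αl sC ≤ sA := by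
      rw [hsC, hsA]
      cases hm : η (Fin.last m) with
      | mu =>
        obtain ⟨hcont, hstrict⟩ := hμ (Fin.last m) hm
        exact mu_sound gC gA hgCmono hgAmono αl (hα (Fin.last m)) hcont hstrict key
      | nu =>
        exact nu_sound gC gA hgCmono hgAmono αl (hα (Fin.last m)) key
    have e1 : eqSol (m+1) fC η = Fin.snoc (solC sC) sC := rfl
    have e2 : eqSol (m+1) fA η = Fin.snoc (solA sA) sA := rfl
    rw [e1, e2]
    intro i
    induction i using Fin.lastCases with
    | last => simpa using hlast
    | cast j =>
      simp only [Fin.snoc_castSucc]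
      exact le_trans (claim1 sC j) (hsolAmono _ _ hlast j)
end

section
/- Let L be a complete lattice and u : L → L a monotone function. Then ū is the least closure above u: ū is monotone, extensive and idempotent; u ⊑ ū pointwise; and for every closure v : L → L with u ⊑ v pointwise, ū ⊑ v pointwise. -/
/-- The least closure above `u`: `ū(x)` is the least fixpoint of `y ↦ u(y) ⊔ x`. -/
def ubar {L : Type*} [CompleteLattice L] (u : L → L) : L → L :=
  fun x => muFix (fun y => u y ⊔ x)


lemma muFix_le {L : Type*} [CompleteLattice L] {f : L → L} {a : L}
    (h : f a ≤ a) : muFix f ≤ a := sInf_le h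

lemma muFix_prefix {L : Type*} [CompleteLattice L] {f : L → L}
    (hf : Monotone f) : f (muFix f) ≤ muFix f := by
  apply le_sInf
  intro a ha
  exact le_trans (hf (sInf_le ha)) ha

/-- `ū` is the least closure above `u`: it is monotone, extensive and
idempotent, it dominates `u`, and it is below every closure dominating `u`. -/
theorem ubar_least_closure
    {L : Type*} [CompleteLattice L]
    (u : L → L) (hu : Monotone u) :
    Monotone (ubar u) ∧
    (∀ x : L, x ≤ ubar u x) ∧
    (∀ x : L, ubar u (ubar u x) = ubar u x) ∧
    (∀ x : L, u x ≤ ubar u x) ∧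
    (∀ v : L → L, Monotone v → (∀ x : L, x ≤ v x) → (∀ x : L, v (v x) = v x) →
      (∀ x : L, u x ≤ v x) → ∀ x : L, ubar u x ≤ v x) := by

  have hpre : ∀ x : L, u (ubar u x) ⊔ x ≤ ubar u x := fun x =>
    muFix_prefix (fun a b hab => sup_le_sup (hu hab) le_rfl)
  have hext : ∀ x : L, x ≤ ubar u x := fun x =>
    le_trans le_sup_right (hpre x)
  have hdom : ∀ x : L, u x ≤ ubar u x := fun x =>
    le_trans (hu (hext x)) (le_trans le_sup_left (hpre x))
  have hmono : Monotone (ubar u) := by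
    intro x y hxy
    refine muFix_le ?_
    exact le_trans (sup_le_sup le_rfl hxy) (hpre y)
  refine ⟨hmono, hext, ?_, hdom, ?_⟩
  · intro x
    refine le_antisymm (muFix_le ?_) (hext _)
    exact sup_le (le_trans le_sup_left (hpre x)) le_rfl
  · intro v hv hvext hvid hvu x
    refine muFix_le ?_
    refine sup_le ?_ (hvext x)
    calc u (v x) ≤ v (v x) := hvu _
    _ = v x := hvid x
end

section
/- Let L be a complete lattice, f : L → L a monotone function, and u : L → L a monotone function with u ∘ f ⊑ f ∘ u (pointwise). Then ν(f ∘ u) ⊑ ν(f ∘ ū) = ν f. If, in addition, u is continuous and strict, then μ(f ∘ u) ⊑ μ(f ∘ ū) = μ f. -/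
section UpToAux

variable {L : Type*} [CompleteLattice L] {u : L → L} (hu : Monotone u)

lemma UpTo.muFix_fixed (f : L → L) (hf : Monotone f) : f (muFix f) = muFix f :=
  OrderHom.map_lfp (⟨f, hf⟩ : L →o L)

include hu

lemma UpTo.ubar_fixed (x : L) : u (ubar u x) ⊔ x = ubar u x :=
  UpTo.muFix_fixed _ (fun a b h => sup_le_sup_right (hu h) _)

lemma UpTo.le_ubar (x : L) : x ≤ ubar u x :=
  le_sup_right.trans (UpTo.ubar_fixed hu x).le

lemma UpTo.u_ubar_le (x : L) : u (ubar u x) ≤ ubar u x :=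
  le_sup_left.trans (UpTo.ubar_fixed hu x).le

lemma UpTo.ubar_le {x y : L} (h1 : u y ≤ y) (h2 : x ≤ y) : ubar u x ≤ y :=
  sInf_le (sup_le h1 h2)

lemma UpTo.ubar_mono : Monotone (ubar u) := fun a b h =>
  UpTo.ubar_le hu (UpTo.u_ubar_le hu b) (h.trans (UpTo.le_ubar hu b))

lemma UpTo.u_le_ubar (x : L) : u x ≤ ubar u x :=
  (hu (UpTo.le_ubar hu x)).trans (UpTo.u_ubar_le hu x)

lemma UpTo.ubar_idem (x : L) : ubar u (ubar u x) = ubar u x :=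
  le_antisymm (UpTo.ubar_le hu (UpTo.u_ubar_le hu x) le_rfl) (UpTo.le_ubar hu _)

lemma UpTo.ubar_compat {f : L → L} (hf : Monotone f)
    (hcompat : ∀ x : L, u (f x) ≤ f (u x)) (x : L) :
    ubar u (f x) ≤ f (ubar u x) :=
  UpTo.ubar_le hu ((hcompat _).trans (hf (UpTo.u_ubar_le hu x)))
    (hf (UpTo.le_ubar hu x))

lemma UpTo.ubar_bot (hs : BotStrict u) : ubar u ⊥ = ⊥ :=
  le_bot_iff.mp (UpTo.ubar_le hu (by rw [hs]) le_rfl)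

lemma UpTo.ubar_cont (hc : DirContinuous u) : DirContinuous (ubar u) := by
  intro S hS hdir
  have himg : DirectedOn (· ≤ ·) (ubar u '' S) := by
    rintro _ ⟨a, ha, rfl⟩ _ ⟨b, hb, rfl⟩
    obtain ⟨c, hc', hac, hbc⟩ := hdir a ha b hb
    exact ⟨ubar u c, ⟨c, hc', rfl⟩, UpTo.ubar_mono hu hac, UpTo.ubar_mono hu hbc⟩
  apply le_antisymm
  · apply UpTo.ubar_le hu
    · rw [hc _ (hS.image _) himg]
      apply sSup_le
      rintro _ ⟨_, ⟨s, hs, rfl⟩, rfl⟩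
      exact le_sSup_of_le ⟨s, hs, rfl⟩ (UpTo.u_ubar_le hu s)
    · exact sSup_le fun s hs => le_sSup_of_le ⟨s, hs, rfl⟩ (UpTo.le_ubar hu s)
  · apply sSup_le
    rintro _ ⟨s, hs, rfl⟩
    exact UpTo.ubar_mono hu (le_sSup hs)

lemma UpTo.ubar_muFix_le {f : L → L} (hf : Monotone f)
    (hcompat : ∀ x : L, u (f x) ≤ f (u x))
    (hc : DirContinuous u) (hs : BotStrict u) :
    ubar u (muFix f) ≤ muFix f := by
  set F : L →o L := ⟨f, hf⟩ with hF
  have hfix : muFix f = OrderHom.lfp F := rfl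
  have key : ∀ i : Ordinal, ubar u (OrdinalApprox.lfpApprox F ⊥ i) ≤ OrderHom.lfp F := by
    intro i
    induction i using Ordinal.induction with
    | h i IH =>
      rw [OrdinalApprox.lfpApprox]
      set T : Set L :=
        {y | ∃ b : Ordinal, ∃ _ : b < i, F (OrdinalApprox.lfpApprox F ⊥ b) = y} ∪ {⊥} with hT
      have hne : T.Nonempty := ⟨⊥, Or.inr rfl⟩
      have hdir : DirectedOn (· ≤ ·) T := by
        rintro x hx y hy
        rcases hx with ⟨b1, hb1, rfl⟩ | hx
        · rcases hy with ⟨b2, hb2, rfl⟩ | hy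
          · refine ⟨F (OrdinalApprox.lfpApprox F ⊥ (max b1 b2)),
              Or.inl ⟨max b1 b2, max_lt hb1 hb2, rfl⟩, ?_, ?_⟩
            · exact F.mono (OrdinalApprox.lfpApprox_monotone F (le_max_left _ _))
            · exact F.mono (OrdinalApprox.lfpApprox_monotone F (le_max_right _ _))
          · rcases hy with rfl
            exact ⟨F (OrdinalApprox.lfpApprox F ⊥ b1), Or.inl ⟨b1, hb1, rfl⟩, le_rfl, bot_le⟩
        · rcases hx with rfl
          exact ⟨y, hy, bot_le, le_rfl⟩
      have hTsup : (⊥ ⊔ ⨆ b, ⨆ (_ : b < i), F (OrdinalApprox.lfpApprox F ⊥ b)) = sSup T := by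
        apply le_antisymm
        · exact sup_le bot_le (iSup₂_le fun b hb => le_sSup (Or.inl ⟨b, hb, rfl⟩))
        · apply sSup_le
          rintro _ (⟨b, hb, rfl⟩ | hz)
          · exact le_sup_of_le_right (le_iSup₂_of_le b hb le_rfl)
          · rcases hz with rfl
            exact bot_le
      rw [hTsup, UpTo.ubar_cont hu hc T hne hdir]
      apply sSup_le
      rintro _ ⟨z, hz, rfl⟩
      rcases hz with ⟨b, hb, rfl⟩ | hz
      · calc ubar u (F (OrdinalApprox.lfpApprox F ⊥ b))
            ≤ F (ubar u (OrdinalApprox.lfpApprox F ⊥ b)) :=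
              UpTo.ubar_compat hu hf hcompat _
          _ ≤ F (OrderHom.lfp F) := F.mono (IH b hb)
          _ ≤ OrderHom.lfp F := (OrderHom.map_lfp F).le
      · rcases hz with rfl
        rw [UpTo.ubar_bot hu hs]
        exact bot_le
  obtain ⟨a, ha⟩ := OrdinalApprox.lfp_mem_range_lfpApprox F
  have h := key a
  rw [ha] at h
  exact hfix ▸ h

end UpToAux

/-- Soundness of compatible up-to functions:
`ν (f ∘ u) ⊑ ν (f ∘ ū) = ν f`, and if `u` is continuous and strict then also
`μ (f ∘ u) ⊑ μ (f ∘ ū) = μ f`. -/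
theorem soundness_of_compatible_up_to
    {L : Type*} [CompleteLattice L]
    (f u : L → L) (hf : Monotone f) (hu : Monotone u)
    (hcompat : ∀ x : L, u (f x) ≤ f (u x)) :
    nuFix (f ∘ u) ≤ nuFix (f ∘ ubar u) ∧ nuFix (f ∘ ubar u) = nuFix f ∧
      (DirContinuous u → BotStrict u →
        muFix (f ∘ u) ≤ muFix (f ∘ ubar u) ∧ muFix (f ∘ ubar u) = muFix f) := by
  have nu_mono : ∀ g h : L → L, (∀ x, g x ≤ h x) → nuFix g ≤ nuFix h := fun g h hle =>
    sSup_le_sSup fun x hx => le_trans hx (hle x)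
  have mu_mono : ∀ g h : L → L, (∀ x, g x ≤ h x) → muFix g ≤ muFix h := fun g h hle =>
    sInf_le_sInf fun x hx => le_trans (hle x) hx
  refine ⟨nu_mono _ _ fun x => hf (UpTo.u_le_ubar hu x), ?_, ?_⟩
  · -- nuFix (f ∘ ubar u) = nuFix f
    apply le_antisymm
    · -- ≤ : ν(f∘ū) is a postfixpoint of f
      have hG : Monotone (f ∘ ubar u) := hf.comp (UpTo.ubar_mono hu)
      set G : L →o L := ⟨f ∘ ubar u, hG⟩ with hGdef
      have ht : nuFix (f ∘ ubar u) = OrderHom.gfp G := rfl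
      set t := OrderHom.gfp G with htdef
      have hfix : f (ubar u t) = t := OrderHom.map_gfp G
      have hub : ubar u t ≤ t := by
        apply OrderHom.le_gfp
        show ubar u t ≤ f (ubar u (ubar u t))
        rw [UpTo.ubar_idem hu]
        calc ubar u t = ubar u (f (ubar u t)) := by rw [hfix]
          _ ≤ f (ubar u (ubar u t)) := UpTo.ubar_compat hu hf hcompat _
          _ = f (ubar u t) := by rw [UpTo.ubar_idem hu]
      have : t ≤ f t := hfix.ge.trans (hf hub)
      rw [ht]
      exact le_sSup this
    · exact nu_mono _ _ fun x => hf (UpTo.le_ubar hu x)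
  · intro hc hs
    refine ⟨mu_mono _ _ fun x => hf (UpTo.u_le_ubar hu x), le_antisymm ?_
      (mu_mono _ _ fun x => hf (UpTo.le_ubar hu x))⟩
    -- muFix (f ∘ ubar u) ≤ muFix f
    apply sInf_le
    show f (ubar u (muFix f)) ≤ muFix f
    calc f (ubar u (muFix f)) ≤ f (muFix f) :=
          hf (UpTo.ubar_muFix_le hu hf hcompat hc hs)
      _ ≤ muFix f := (UpTo.muFix_fixed f hf).le
end

section
/- Let E : x =_η f(x) be a system of m fixpoint equations over a complete lattice L with basis B_L, and let u be a compatible tuple of extensive up-to functions for E. For every b ∈ B_L and i ∈ {1,…,m}: if b ⊑ u_i(⊔B') for some subset B' ⊆ B_L all of whose elements b' satisfy b' ⊑ sol_i(E), then b ⊑ sol_i(E), where sol_i(E) denotes the i-th component of the solution of E. -/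
section UpToAux

variable {L : Type*} [CompleteLattice L]

theorem snoc_mono {m : ℕ} {v w : Fin m → L} {x y : L} (h : v ≤ w) (hxy : x ≤ y) :
    (Fin.snoc v x : Fin (m+1) → L) ≤ Fin.snoc w y := by
  intro k
  refine Fin.lastCases ?_ ?_ k
  · simpa [Fin.snoc_last] using hxy
  · intro k; simpa [Fin.snoc_castSucc] using h k

theorem eqSol_succ_eq (m : ℕ) (f : (Fin (m+1) → L) → Fin (m+1) → L)
    (η : Fin (m+1) → EqMarker) :
    eqSol (m+1) f η =
      Fin.snoc
        (eqSol m (fun v j => f (Fin.snoc v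
            (match η (Fin.last m) with
              | EqMarker.mu => muFix (fun x => f (Fin.snoc
                  (eqSol m (fun v j => f (Fin.snoc v x) j.castSucc) (fun j => η j.castSucc)) x)
                  (Fin.last m))
              | EqMarker.nu => nuFix (fun x => f (Fin.snoc
                  (eqSol m (fun v j => f (Fin.snoc v x) j.castSucc) (fun j => η j.castSucc)) x)
                  (Fin.last m)))) j.castSucc) (fun j => η j.castSucc))
        (match η (Fin.last m) with
          | EqMarker.mu => muFix (fun x => f (Fin.snoc
              (eqSol m (fun v j => f (Fin.snoc v x) j.castSucc) (fun j => η j.castSucc)) x)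
              (Fin.last m))
          | EqMarker.nu => nuFix (fun x => f (Fin.snoc
              (eqSol m (fun v j => f (Fin.snoc v x) j.castSucc) (fun j => η j.castSucc)) x)
              (Fin.last m))) := rfl

theorem eqSol_le_eqSol : ∀ (m : ℕ) (f f' : (Fin m → L) → Fin m → L), Monotone f →
    Monotone f' → (∀ v, f v ≤ f' v) → ∀ η : Fin m → EqMarker,
    eqSol m f η ≤ eqSol m f' η := by
  intro m
  induction m with
  | zero => intro _ _ _ _ _ _ j; exact j.elim0
  | succ m IH =>
    intro f f' hf hf' hle η
    have hmsub : ∀ (h : (Fin (m+1) → L) → Fin (m+1) → L), Monotone h → ∀ x : L,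
        Monotone (fun v (j : Fin m) => h (Fin.snoc v x) j.castSucc) := by
      intro h hh x v w hvw j
      exact hh (snoc_mono hvw le_rfl) j.castSucc
    set sp : L → Fin m → L := fun x =>
      eqSol m (fun v j => f (Fin.snoc v x) j.castSucc) (fun j => η j.castSucc) with hsp
    set sp' : L → Fin m → L := fun x =>
      eqSol m (fun v j => f' (Fin.snoc v x) j.castSucc) (fun j => η j.castSucc) with hsp'
    have hsple : ∀ x y : L, x ≤ y → sp x ≤ sp' y := by
      intro x y hxy
      exact IH _ _ (hmsub f hf x) (hmsub f' hf' y)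
        (fun v j => le_trans (hle _ _) (hf' (snoc_mono le_rfl hxy) j.castSucc)) _
    set g : L → L := fun x => f (Fin.snoc (sp x) x) (Fin.last m) with hg
    set g' : L → L := fun x => f' (Fin.snoc (sp' x) x) (Fin.last m) with hg'
    have hspm : ∀ x y : L, x ≤ y → sp x ≤ sp y := by
      intro x y hxy
      exact IH _ _ (hmsub f hf x) (hmsub f hf y)
        (fun v j => hf (snoc_mono le_rfl hxy) j.castSucc) _
    have hsp'm : ∀ x y : L, x ≤ y → sp' x ≤ sp' y := by
      intro x y hxy
      exact IH _ _ (hmsub f' hf' x) (hmsub f' hf' y)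
        (fun v j => hf' (snoc_mono le_rfl hxy) j.castSucc) _
    have hgm : Monotone g := fun x y hxy => hf (snoc_mono (hspm x y hxy) hxy) (Fin.last m)
    have hg'm : Monotone g' := fun x y hxy => hf' (snoc_mono (hsp'm x y hxy) hxy) (Fin.last m)
    have hgle : ∀ x : L, g x ≤ g' x := fun x =>
      le_trans (hle _ _) (hf' (snoc_mono (hsple x x le_rfl) le_rfl) (Fin.last m))
    have hmu : muFix g ≤ muFix g' := by
      have : OrderHom.lfp ⟨g, hgm⟩ ≤ OrderHom.lfp ⟨g', hg'm⟩ :=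
        OrderHom.lfp.monotone (fun x => hgle x)
      exact this
    have hnu : nuFix g ≤ nuFix g' := by
      have : OrderHom.gfp ⟨g, hgm⟩ ≤ OrderHom.gfp ⟨g', hg'm⟩ :=
        OrderHom.gfp.monotone (fun x => hgle x)
      exact this
    rw [eqSol_succ_eq m f η, eqSol_succ_eq m f' η]
    cases hη : η (Fin.last m) <;> simp only [hη] <;>
      [ exact snoc_mono (le_trans (hspm _ _ hmu) (hsple _ _ le_rfl)) hmu ;
        exact snoc_mono (le_trans (hspm _ _ hnu) (hsple _ _ le_rfl)) hnu ]

open OrdinalApprox Cardinal Order in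
/-- kernel lemma: compatible extensive up-to tuples are below the solution. -/
theorem compat_le_eqSol : ∀ (m : ℕ) (f f' : (Fin m → L) → Fin m → L), Monotone f →
    Monotone f' → ∀ (η : Fin m → EqMarker) (u : Fin m → L → L),
    (∀ i, Monotone (u i)) →
    (∀ i, η i = EqMarker.mu → DirContinuous (u i) ∧ BotStrict (u i)) →
    (∀ i x, x ≤ u i x) →
    (∀ v j, u j (f v j) ≤ f' (fun k => u k (v k)) j) →
    ∀ j, u j (eqSol m f η j) ≤ eqSol m f' η j := by
  intro m
  induction m with
  | zero => intro _ _ _ _ _ _ _ _ _ _ j; exact j.elim0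
  | succ m IH =>
    intro f f' hf hf' η u hu hμ hext hcomp
    have hmsub : ∀ (h : (Fin (m+1) → L) → Fin (m+1) → L), Monotone h → ∀ x : L,
        Monotone (fun v (j : Fin m) => h (Fin.snoc v x) j.castSucc) := by
      intro h hh x v w hvw j
      exact hh (snoc_mono hvw le_rfl) j.castSucc
    set sp : L → Fin m → L := fun x =>
      eqSol m (fun v j => f (Fin.snoc v x) j.castSucc) (fun j => η j.castSucc) with hsp
    set sp' : L → Fin m → L := fun x =>
      eqSol m (fun v j => f' (Fin.snoc v x) j.castSucc) (fun j => η j.castSucc) with hsp'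
    set g : L → L := fun x => f (Fin.snoc (sp x) x) (Fin.last m) with hg
    set g' : L → L := fun x => f' (Fin.snoc (sp' x) x) (Fin.last m) with hg'
    have hspm : ∀ x y : L, x ≤ y → sp x ≤ sp y := by
      intro x y hxy
      exact eqSol_le_eqSol _ _ _ (hmsub f hf x) (hmsub f hf y)
        (fun v j => hf (snoc_mono le_rfl hxy) j.castSucc) _
    have hsp'm : ∀ x y : L, x ≤ y → sp' x ≤ sp' y := by
      intro x y hxy
      exact eqSol_le_eqSol _ _ _ (hmsub f' hf' x) (hmsub f' hf' y)
        (fun v j => hf' (snoc_mono le_rfl hxy) j.castSucc) _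
    have hgm : Monotone g := fun x y hxy => hf (snoc_mono (hspm x y hxy) hxy) (Fin.last m)
    have hg'm : Monotone g' := fun x y hxy => hf' (snoc_mono (hsp'm x y hxy) hxy) (Fin.last m)
    -- the key sub-claim, from the inductive hypothesis
    have sub : ∀ x y : L, u (Fin.last m) x ≤ y →
        ∀ j : Fin m, u j.castSucc (sp x j) ≤ sp' y j := by
      intro x y hxy
      refine IH _ _ (hmsub f hf x) (hmsub f' hf' y) _ (fun j => u j.castSucc)
        (fun j => hu _) (fun j hj => hμ _ hj) (fun j z => hext _ z) ?_
      intro v j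
      refine le_trans (hcomp (Fin.snoc v x) j.castSucc) ?_
      refine hf' ?_ j.castSucc
      intro k
      refine Fin.lastCases ?_ ?_ k
      · simpa [Fin.snoc_last] using hxy
      · intro k; simp [Fin.snoc_castSucc]
    -- step lemma for the last component
    have key : ∀ x : L, u (Fin.last m) (g x) ≤ g' (u (Fin.last m) x) := by
      intro x
      refine le_trans (hcomp (Fin.snoc (sp x) x) (Fin.last m)) ?_
      refine hf' ?_ (Fin.last m)
      intro k
      refine Fin.lastCases ?_ ?_ k
      · simp [Fin.snoc_last]
      · intro k
        simpa [Fin.snoc_castSucc] using sub x (u (Fin.last m) x) le_rfl k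
    have hmufix : muFix g = OrderHom.lfp ⟨g, hgm⟩ := rfl
    have hmufix' : muFix g' = OrderHom.lfp ⟨g', hg'm⟩ := rfl
    have hnufix : nuFix g = OrderHom.gfp ⟨g, hgm⟩ := rfl
    have hnufix' : nuFix g' = OrderHom.gfp ⟨g', hg'm⟩ := rfl
    rw [eqSol_succ_eq m f η, eqSol_succ_eq m f' η]
    have hlast : ∀ s s' : L,
        (match η (Fin.last m) with | EqMarker.mu => muFix g | EqMarker.nu => nuFix g) = s →
        (match η (Fin.last m) with | EqMarker.mu => muFix g' | EqMarker.nu => nuFix g') = s' →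
        u (Fin.last m) s ≤ s' := by
      intro s s' hs hs'
      cases hη : η (Fin.last m) with
      | nu =>
        rw [hη] at hs hs'
        simp only at hs hs'
        subst hs hs'
        have hfix : g (nuFix g) = nuFix g := by
          rw [hnufix]; exact OrderHom.map_gfp ⟨g, hgm⟩
        have hpost : u (Fin.last m) (nuFix g) ≤ g' (u (Fin.last m) (nuFix g)) := by
          conv_lhs => rw [← hfix]
          exact key _
        rw [hnufix']
        exact OrderHom.le_gfp ⟨g', hg'm⟩ hpost
      | mu =>
        rw [hη] at hs hs'
        simp only at hs hs'
        subst hs hs'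
        obtain ⟨hcont, hstrict⟩ := hμ (Fin.last m) hη
        have happ : ∀ a : Ordinal, u (Fin.last m) (lfpApprox ⟨g, hgm⟩ ⊥ a) ≤ muFix g' := by
          intro a
          induction a using Ordinal.induction with
          | h a ih =>
            rw [lfpApprox]
            set S : Set L :=
              {y | ∃ b : Ordinal, ∃ _ : b < a, (⟨g, hgm⟩ : L →o L) (lfpApprox ⟨g, hgm⟩ ⊥ b) = y}
                ∪ {⊥} with hS
            have hne : S.Nonempty := ⟨⊥, Or.inr rfl⟩
            have hdir : DirectedOn (· ≤ ·) S := by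
              rintro z₁ (⟨b₁, hb₁, rfl⟩ | hz₁) z₂ (⟨b₂, hb₂, rfl⟩ | hz₂)
              · rcases le_total b₁ b₂ with h | h
                · exact ⟨_, Or.inl ⟨b₂, hb₂, rfl⟩,
                    hgm (lfpApprox_monotone ⟨g, hgm⟩ h), le_rfl⟩
                · exact ⟨_, Or.inl ⟨b₁, hb₁, rfl⟩, le_rfl,
                    hgm (lfpApprox_monotone ⟨g, hgm⟩ h)⟩
              · exact ⟨_, Or.inl ⟨b₁, hb₁, rfl⟩, le_rfl, by simp_all⟩
              · exact ⟨_, Or.inl ⟨b₂, hb₂, rfl⟩, by simp_all, le_rfl⟩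
              · exact ⟨⊥, Or.inr rfl, by simp_all, by simp_all⟩
            have hSeq : (⊥ ⊔ ⨆ b, ⨆ (_ : b < a), (⟨g, hgm⟩ : L →o L) (lfpApprox ⟨g, hgm⟩ ⊥ b))
                = sSup S := by
              apply le_antisymm
              · exact sup_le (le_sSup (Or.inr rfl))
                  (iSup₂_le fun b hb => le_sSup (Or.inl ⟨b, hb, rfl⟩))
              · refine sSup_le ?_
                rintro y (⟨b, hb, rfl⟩ | hy)
                · exact le_sup_of_le_right (le_iSup₂_of_le b hb le_rfl)
                · rw [Set.mem_singleton_iff.mp hy]; exact bot_le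
            rw [hSeq, hcont S hne hdir]
            apply sSup_le
            rintro y ⟨z, hz, rfl⟩
            rcases hz with ⟨b, hb, rfl⟩ | hz
            · have h1 : u (Fin.last m) (g (lfpApprox ⟨g, hgm⟩ ⊥ b)) ≤
                  g' (u (Fin.last m) (lfpApprox ⟨g, hgm⟩ ⊥ b)) := key _
              refine le_trans h1 (le_trans (hg'm (ih b hb)) ?_)
              rw [hmufix']
              exact le_of_eq (OrderHom.map_lfp ⟨g', hg'm⟩)
            · simp only [Set.mem_singleton_iff] at hz
              subst hz
              rw [hstrict]
              exact bot_le
        have : muFix g = lfpApprox ⟨g, hgm⟩ ⊥ (ord <| succ #L) := by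
          rw [hmufix, lfpApprox_ord_eq_lfp]
        rw [this]
        exact happ _
    cases hη : η (Fin.last m) with
    | mu =>
      simp only [hη]
      intro j
      refine Fin.lastCases ?_ ?_ j
      · simp only [Fin.snoc_last]
        exact hlast _ _ (by rw [hη]) (by rw [hη])
      · intro j
        simp only [Fin.snoc_castSucc]
        exact sub _ _ (hlast _ _ (by rw [hη]) (by rw [hη])) j
    | nu =>
      simp only [hη]
      intro j
      refine Fin.lastCases ?_ ?_ j
      · simp only [Fin.snoc_last]
        exact hlast _ _ (by rw [hη]) (by rw [hη])
      · intro j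
        simp only [Fin.snoc_castSucc]
        exact sub _ _ (hlast _ _ (by rw [hη]) (by rw [hη])) j

end UpToAux

/-- Up-to techniques for checking bounds on solutions: for a compatible tuple
`u` of extensive up-to functions for `E`, if `b ∈ B_L` satisfies
`b ⊑ u_i(⊔ B')` for some `B' ⊆ B_L` whose elements are all below the `i`-th
component of the solution, then `b` is below the `i`-th component of the
solution. -/

theorem up_to_basis_bound
    {L : Type*} [CompleteLattice L]
    (B : Set L) (hB : ∀ l : L, l = sSup {b | b ∈ B ∧ b ≤ l})
    (m : ℕ) (f : (Fin m → L) → Fin m → L) (hf : Monotone f)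
    (η : Fin m → EqMarker)
    (u : Fin m → L → L) (hu : ∀ i, Monotone (u i))
    (hcompat : ∀ (v : Fin m → L) (i : Fin m), u i (f v i) ≤ f (fun j => u j (v j)) i)
    (hμ : ∀ i, η i = EqMarker.mu → DirContinuous (u i) ∧ BotStrict (u i))
    (hext : ∀ (i : Fin m) (x : L), x ≤ u i x) :
    ∀ b ∈ B, ∀ i : Fin m, ∀ B' ⊆ B,
      (∀ b' ∈ B', b' ≤ eqSol m f η i) →
      b ≤ u i (sSup B') →
      b ≤ eqSol m f η i := by
  intro b hb i B' hB' hbelow hle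
  have h1 : sSup B' ≤ eqSol m f η i := sSup_le hbelow
  have h2 : u i (sSup B') ≤ u i (eqSol m f η i) := hu i h1
  have h3 : u i (eqSol m f η i) ≤ eqSol m f η i :=
    compat_le_eqSol m f f hf hf η u hu hμ hext hcompat i
  exact le_trans hle (le_trans h2 h3)
end
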